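/- arXiv:2403.03928 — 6 statements merged into one kernel-verified Lean document; each statement's English description precedes it below -/
import Mathlib

section
/- Let S be a positive integer and let a, b, c, d be elements of the direct sum ⊕_{i∈ℤ} ℤ/2 (finitely supported functions ℤ → ℤ/2). Suppose suppInt(a−b) ≤ S, suppInt(a−c) ≤ S, suppInt(b−d) ≤ S, suppInt(c−d) ≤ S, while suppInt(a−d) ≥ 2S and suppInt(b−c) ≥ 2S. Then a + d = b + c (equivalently, since every element is 2-torsion, a + b = c + d); i.e. every such quadrilateral is a parallelogram. -/
/-! Write `x = a - b`, `y = b - d`, `z = a - c`, `w = c - d`, so that `x + y = z + w = a - d`.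
Pick `i < j` in the support of `a - d` with `j - i + 1 ≥ 2S`. Each of `x, y, z, w` has support of
width at most `S`, so it cannot contain both `i` and `j`; hence `i` lies in the support of one of
`x, y` and `j` in that of the other, and likewise for `z, w`. If `y` and `w` contain the same point,
then `b - c = y - w` is supported in an interval of width `2S - 1`, contradicting `suppInt (b - c) ≥ 2S`.
Otherwise `x - w` is supported near one of `i, j` and `z - y` near the other; as `x - w = z - y`,
both vanish, i.e. `a - b = c - d`. -/

open Finset

/-- The length of the smallest interval of integers containing the support of `x`:
`max(supp x) − min(supp x) + 1` when `x ≠ 0`, and `0` when `x = 0`. -/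
noncomputable def suppInt (x : ℤ →₀ ZMod 2) : ℤ :=
  if h : x.support.Nonempty then x.support.max' h - x.support.min' h + 1 else 0

section suppInt

variable {v p q s : ℤ →₀ ZMod 2} {S T i j : ℤ}

lemma sub_add_one_le_suppInt (hi : i ∈ v.support) (hj : j ∈ v.support) :
    j - i + 1 ≤ suppInt v := by
  rw [suppInt, dif_pos ⟨i, hi⟩]
  have := v.support.min'_le i hi
  have := v.support.le_max' j hj
  omega

lemma exists_mem_support_of_le_suppInt (hT : 0 < T) (h : T ≤ suppInt v) :
    ∃ i ∈ v.support, ∃ j ∈ v.support, T ≤ j - i + 1 := by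
  rw [suppInt] at h
  split_ifs at h with hne
  · exact ⟨_, v.support.min'_mem hne, _, v.support.max'_mem hne, h⟩
  · omega

lemma suppInt_le_of_support_subset_Icc (hS : 0 ≤ S) (h : v.support ⊆ Icc i (i + S - 1)) :
    suppInt v ≤ S := by
  rw [suppInt]
  split_ifs with hne
  · have hmax := mem_Icc.1 (h (v.support.max'_mem hne))
    have hmin := mem_Icc.1 (h (v.support.min'_mem hne))
    omega
  · exact hS

lemma support_subset_Icc_of_mem_support (hi : i ∈ v.support) (hv : suppInt v ≤ S) :
    v.support ⊆ Icc (i - S + 1) (i + S - 1) := by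
  intro k hk
  have := sub_add_one_le_suppInt hi hk
  have := sub_add_one_le_suppInt hk hi
  rw [mem_Icc]
  omega

lemma support_sub_subset_Icc (hp : i ∈ p.support) (hq : i ∈ q.support)
    (hpS : suppInt p ≤ S) (hqS : suppInt q ≤ S) :
    (p - q).support ⊆ Icc (i - S + 1) (i + S - 1) :=
  Finsupp.support_sub.trans <| union_subset
    (support_subset_Icc_of_mem_support hp hpS) (support_subset_Icc_of_mem_support hq hqS)

lemma suppInt_sub_le (hp : i ∈ p.support) (hq : i ∈ q.support)
    (hpS : suppInt p ≤ S) (hqS : suppInt q ≤ S) : suppInt (p - q) ≤ 2 * S - 1 := by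
  have := sub_add_one_le_suppInt hp hp
  apply suppInt_le_of_support_subset_Icc (by omega)
  convert support_sub_subset_Icc hp hq hpS hqS using 2
  ring

lemma mem_support_split (hs : p + q = s) (hp : suppInt p ≤ S) (hq : suppInt q ≤ S)
    (hi : i ∈ s.support) (hj : j ∈ s.support) (hij : S < j - i + 1) :
    i ∈ p.support ∧ j ∈ q.support ∨ i ∈ q.support ∧ j ∈ p.support := by
  have hsub : s.support ⊆ p.support ∪ q.support := hs ▸ Finsupp.support_add
  have not_both : ∀ v : ℤ →₀ ZMod 2, suppInt v ≤ S → i ∈ v.support → j ∉ v.support :=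
    fun v hv hiv hjv ↦ by have := sub_add_one_le_suppInt hiv hjv; omega
  rcases mem_union.1 (hsub hi) with hip | hiq <;> rcases mem_union.1 (hsub hj) with hjp | hjq
  · exact absurd hjp (not_both p hp hip)
  · exact .inl ⟨hip, hjq⟩
  · exact .inr ⟨hiq, hjp⟩
  · exact absurd hjq (not_both q hq hiq)

lemma add_eq_add_of_mem_support {a b c d : ℤ →₀ ZMod 2}
    (hab : suppInt (a - b) ≤ S) (hac : suppInt (a - c) ≤ S)
    (hbd : suppInt (b - d) ≤ S) (hcd : suppInt (c - d) ≤ S)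
    (hiab : i ∈ (a - b).support) (hicd : i ∈ (c - d).support)
    (hjac : j ∈ (a - c).support) (hjbd : j ∈ (b - d).support) (hij : 2 * S ≤ j - i + 1) :
    a + d = b + c := by
  have hdisj : Disjoint (Icc (i - S + 1) (i + S - 1)) (Icc (j - S + 1) (j + S - 1)) := by
    rw [disjoint_left]
    intro k hki hkj
    rw [mem_Icc] at hki hkj
    omega
  have hsame : (a - b) - (c - d) = (a - c) - (b - d) := by abel
  have hzero : (a - b) - (c - d) = 0 := by
    rw [← Finsupp.support_eq_empty, ← disjoint_self_iff_empty]
    exact hdisj.mono (support_sub_subset_Icc hiab hicd hab hcd)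
      (hsame ▸ support_sub_subset_Icc hjac hjbd hac hbd)
  rw [sub_eq_zero, sub_eq_sub_iff_add_eq_add] at hzero
  rw [hzero, add_comm]

end suppInt

/-- Every sufficiently "large" quadrilateral in `⊕_{i∈ℤ} ℤ/2` is a parallelogram. -/
theorem large_quadrilateral_is_parallelogram
    (S : ℤ) (hS : 0 < S) (a b c d : ℤ →₀ ZMod 2)
    (hab : suppInt (a - b) ≤ S) (hac : suppInt (a - c) ≤ S)
    (hbd : suppInt (b - d) ≤ S) (hcd : suppInt (c - d) ≤ S)
    (had : 2 * S ≤ suppInt (a - d)) (hbc : 2 * S ≤ suppInt (b - c)) :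
    a + d = b + c := by
  obtain ⟨i, hi, j, hj, hij⟩ := exists_mem_support_of_le_suppInt (by omega) had
  rcases mem_support_split (sub_add_sub_cancel a b d) hab hbd hi hj (by omega) with
    ⟨hiab, hjbd⟩ | ⟨hibd, hjab⟩ <;>
  rcases mem_support_split (sub_add_sub_cancel a c d) hac hcd hi hj (by omega) with
    ⟨hiac, hjcd⟩ | ⟨hicd, hjac⟩
  · have := suppInt_sub_le hjbd hjcd hbd hcd
    rw [sub_sub_sub_cancel_right] at this
    omega
  · exact add_eq_add_of_mem_support hab hac hbd hcd hiab hicd hjac hjbd hij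
  · exact (add_eq_add_of_mem_support hac hab hcd hbd hiac hibd hjab hjcd hij).trans (add_comm _ _)
  · have := suppInt_sub_le hibd hicd hbd hcd
    rw [sub_sub_sub_cancel_right] at this
    omega
end

section
/- Let n ≥ 2 be an integer and ε ≥ 1 a real number. Let p₁, p₂, p₃, p₄ ∈ ℚ, let r₁, r₂, r₃, r₄ be integers none of which is divisible by n with |rᵢ| ≤ ε for all i, and let k₁, k₂, k₃, k₄ be integers such that p₂ − p₁ = r₁·n^{k₁}, p₃ − p₂ = r₂·n^{k₂}, p₄ − p₃ = r₃·n^{k₃}, and p₁ − p₄ = r₄·n^{k₄}. Suppose k₁ > k₂, k₃ > k₄, n^{k₁−k₂} > 2ε, and n^{k₃−k₄} > 2ε. Then k₂ = k₄, k₁ = k₃, r₂ = −r₄, r₁ = −r₃, and consequently p₁ + p₃ = p₂ + p₄. -/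
/-!
Going around the quadrilateral gives `r₁ n^{k₁} + r₂ n^{k₂} + r₃ n^{k₃} + r₄ n^{k₄} = 0`; read it
against the decreasing chain of subgroups `ℤ n^c` of `ℚ`. A term `r n^a` with `n ∤ r` lies in
`ℤ n^a` but not in `ℤ n^{a+1}`, so two such terms whose sum lies deeper than the shallower of them
have the same exponent. As `k₁ > k₂` and `k₃ > k₄`, this forces `k₂ = k₄`. Then `(r₂ + r₄) n^{k₂}`
lies in `ℤ n^{min k₁ k₃}`, and the gap condition `n^{kᵢ - k₂} > 2ε ≥ |r₂ + r₄|` makes it vanish;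
what remains, `r₁ n^{k₁} + r₃ n^{k₃} = 0`, gives `k₁ = k₃` in the same way, and then `r₁ = -r₃`.
-/

open AddSubgroup

section ZpowMultiples

variable {n : ℤ}

theorem zmultiples_zpow_le_zmultiples_zpow (hn : n ≠ 0) {c d : ℤ} (h : c ≤ d) :
    zmultiples ((n : ℚ) ^ d) ≤ zmultiples ((n : ℚ) ^ c) := by
  obtain ⟨j, hj⟩ := Int.eq_ofNat_of_zero_le (sub_nonneg.2 h)
  refine zmultiples_le.2 (mem_zmultiples_iff.2 ⟨n ^ j, ?_⟩)
  rw [show d = j + c by omega, zpow_add₀ (Int.cast_ne_zero.2 hn), zsmul_eq_mul]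
  push_cast
  rfl

theorem intCast_mul_zpow_mem_zmultiples_zpow (hn : n ≠ 0) (r : ℤ) {c d : ℤ} (h : c ≤ d) :
    (r : ℚ) * (n : ℚ) ^ d ∈ zmultiples ((n : ℚ) ^ c) := by
  rw [← zsmul_eq_mul]
  exact zsmul_mem (zmultiples_zpow_le_zmultiples_zpow hn h (mem_zmultiples _)) r

theorem intCast_mul_zpow_notMem_zmultiples_zpow_add_one (hn : n ≠ 0) {r : ℤ} (hr : ¬ n ∣ r)
    (a : ℤ) : (r : ℚ) * (n : ℚ) ^ a ∉ zmultiples ((n : ℚ) ^ (a + 1)) := by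
  intro hmem
  obtain ⟨t, ht⟩ := mem_zmultiples_iff.1 hmem
  have hna : (n : ℚ) ^ a ≠ 0 := zpow_ne_zero _ (Int.cast_ne_zero.2 hn)
  rw [zsmul_eq_mul, zpow_add_one₀ (Int.cast_ne_zero.2 hn)] at ht
  have hrt : (r : ℚ) = t * n := mul_right_cancel₀ hna (by linear_combination -ht)
  exact hr ⟨t, by rw [mul_comm]; exact_mod_cast hrt⟩

theorem eq_of_intCast_mul_zpow_add_mem_zmultiples_zpow (hn : n ≠ 0) {r s : ℤ}
    (hr : ¬ n ∣ r) (hs : ¬ n ∣ s) {a b c : ℤ} (hc : min a b < c)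
    (h : (r : ℚ) * (n : ℚ) ^ a + (s : ℚ) * (n : ℚ) ^ b ∈ zmultiples ((n : ℚ) ^ c)) : a = b := by
  by_contra hab
  wlog hlt : a < b generalizing r s a b
  · exact this hs hr (by rwa [min_comm]) (by rwa [add_comm]) (Ne.symm hab) (by omega)
  refine intCast_mul_zpow_notMem_zmultiples_zpow_add_one hn hr a ?_
  rw [← add_sub_cancel_right ((r : ℚ) * (n : ℚ) ^ a) ((s : ℚ) * (n : ℚ) ^ b)]
  exact sub_mem (zmultiples_zpow_le_zmultiples_zpow hn (by omega) h)
    (intCast_mul_zpow_mem_zmultiples_zpow hn s (by omega))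

theorem eq_zero_of_intCast_mul_zpow_mem_zmultiples_zpow (hn : n ≠ 0) {t k c : ℤ} (hkc : k ≤ c)
    (ht : (|t| : ℝ) < (n : ℝ) ^ (c - k))
    (h : (t : ℚ) * (n : ℚ) ^ k ∈ zmultiples ((n : ℚ) ^ c)) : t = 0 := by
  obtain ⟨u, hu⟩ := mem_zmultiples_iff.1 h
  obtain ⟨j, hj⟩ := Int.eq_ofNat_of_zero_le (sub_nonneg.2 hkc)
  have hnk : (n : ℚ) ^ k ≠ 0 := zpow_ne_zero _ (Int.cast_ne_zero.2 hn)
  rw [zsmul_eq_mul, show c = j + k by omega, zpow_add₀ (Int.cast_ne_zero.2 hn)] at hu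
  have htu : (t : ℚ) = u * (n : ℚ) ^ j := mul_right_cancel₀ hnk (by rw [← hu, zpow_natCast]; ring)
  refine Int.eq_zero_of_abs_lt_dvd (m := n ^ j) ⟨u, ?_⟩ ?_
  · rw [mul_comm]; exact_mod_cast htu
  · rw [hj, zpow_natCast] at ht; exact_mod_cast ht

end ZpowMultiples

theorem BS_quadrilateral_is_parallelogram_general
    (n : ℤ) (hn : 2 ≤ n) (ε : ℝ)
    (p₁ p₂ p₃ p₄ : ℚ)
    (r₁ r₂ r₃ r₄ : ℤ)
    (hr₁ : ¬ n ∣ r₁) (hr₂ : ¬ n ∣ r₂) (hr₃ : ¬ n ∣ r₃) (hr₄ : ¬ n ∣ r₄)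
    (hb₂ : (|r₂| : ℝ) ≤ ε)
    (hb₄ : (|r₄| : ℝ) ≤ ε)
    (k₁ k₂ k₃ k₄ : ℤ)
    (he₁ : p₂ - p₁ = (r₁ : ℚ) * (n : ℚ) ^ k₁)
    (he₂ : p₃ - p₂ = (r₂ : ℚ) * (n : ℚ) ^ k₂)
    (he₃ : p₄ - p₃ = (r₃ : ℚ) * (n : ℚ) ^ k₃)
    (he₄ : p₁ - p₄ = (r₄ : ℚ) * (n : ℚ) ^ k₄)
    (hk₁₂ : k₁ > k₂) (hk₃₄ : k₃ > k₄)
    (hM₁ : (n : ℝ) ^ (k₁ - k₂) > 2 * ε) (hM₂ : (n : ℝ) ^ (k₃ - k₄) > 2 * ε) :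
    k₂ = k₄ ∧ k₁ = k₃ ∧ r₂ = -r₄ ∧ r₁ = -r₃ ∧ p₁ + p₃ = p₂ + p₄ := by
  have hn0 : n ≠ 0 := by omega
  have hdeep : -((r₁ : ℚ) * (n : ℚ) ^ k₁ + (r₃ : ℚ) * (n : ℚ) ^ k₃) ∈
      zmultiples ((n : ℚ) ^ min k₁ k₃) :=
    neg_mem (add_mem (intCast_mul_zpow_mem_zmultiples_zpow hn0 r₁ (min_le_left _ _))
      (intCast_mul_zpow_mem_zmultiples_zpow hn0 r₃ (min_le_right _ _)))
  have hsum : (r₂ : ℚ) * (n : ℚ) ^ k₂ + (r₄ : ℚ) * (n : ℚ) ^ k₄ =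
      -((r₁ : ℚ) * (n : ℚ) ^ k₁ + (r₃ : ℚ) * (n : ℚ) ^ k₃) := by
    linear_combination -he₁ - he₂ - he₃ - he₄
  obtain rfl : k₂ = k₄ := eq_of_intCast_mul_zpow_add_mem_zmultiples_zpow hn0 hr₂ hr₄
    (c := min k₁ k₃) (by omega) (hsum ▸ hdeep)
  have hr₂₄ : r₂ + r₄ = 0 := by
    refine eq_zero_of_intCast_mul_zpow_mem_zmultiples_zpow hn0 (k := k₂) (c := min k₁ k₃)
      (by omega) ?_ (by push_cast; rw [add_mul, hsum]; exact hdeep)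
    have hgap : 2 * ε < (n : ℝ) ^ (min k₁ k₃ - k₂) := by
      rcases min_choice k₁ k₃ with h | h <;> rw [h] <;> assumption
    push_cast
    linarith [abs_add_le (r₂ : ℝ) r₄]
  have hr₂₄' : (r₂ : ℚ) + r₄ = 0 := by exact_mod_cast hr₂₄
  have hsum₁₃ : (r₁ : ℚ) * (n : ℚ) ^ k₁ + (r₃ : ℚ) * (n : ℚ) ^ k₃ = 0 := by
    linear_combination hsum - (n : ℚ) ^ k₂ * hr₂₄'
  obtain rfl : k₁ = k₃ := eq_of_intCast_mul_zpow_add_mem_zmultiples_zpow hn0 hr₁ hr₃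
    (c := max k₁ k₃ + 1) (by omega) (hsum₁₃ ▸ zero_mem _)
  have hr₁₃ : r₁ + r₃ = 0 := by
    rw [← add_mul] at hsum₁₃
    exact_mod_cast (mul_eq_zero.1 hsum₁₃).resolve_right (zpow_ne_zero _ (Int.cast_ne_zero.2 hn0))
  exact ⟨rfl, rfl, by omega, by omega, by linear_combination he₂ + he₄ + (n : ℚ) ^ k₂ * hr₂₄'⟩

/-- The arithmetic core of Taback's rigidity argument for `BS(1,n)`: an
`(ε',M')`-quadrilateral in `ℤ[1/n]` is automatically a parallelogram. -/
theorem BS_quadrilateral_is_parallelogram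
    (n : ℤ) (hn : 2 ≤ n) (ε : ℝ) (hε : 1 ≤ ε)
    (p₁ p₂ p₃ p₄ : ℚ)
    (r₁ r₂ r₃ r₄ : ℤ)
    (hr₁ : ¬ n ∣ r₁) (hr₂ : ¬ n ∣ r₂) (hr₃ : ¬ n ∣ r₃) (hr₄ : ¬ n ∣ r₄)
    (hb₁ : (|r₁| : ℝ) ≤ ε) (hb₂ : (|r₂| : ℝ) ≤ ε) (hb₃ : (|r₃| : ℝ) ≤ ε)
    (hb₄ : (|r₄| : ℝ) ≤ ε)
    (k₁ k₂ k₃ k₄ : ℤ)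
    (he₁ : p₂ - p₁ = (r₁ : ℚ) * (n : ℚ) ^ k₁)
    (he₂ : p₃ - p₂ = (r₂ : ℚ) * (n : ℚ) ^ k₂)
    (he₃ : p₄ - p₃ = (r₃ : ℚ) * (n : ℚ) ^ k₃)
    (he₄ : p₁ - p₄ = (r₄ : ℚ) * (n : ℚ) ^ k₄)
    (hk₁₂ : k₁ > k₂) (hk₃₄ : k₃ > k₄)
    (hM₁ : (n : ℝ) ^ (k₁ - k₂) > 2 * ε) (hM₂ : (n : ℝ) ^ (k₃ - k₄) > 2 * ε) :
    k₂ = k₄ ∧ k₁ = k₃ ∧ r₂ = -r₄ ∧ r₁ = -r₃ ∧ p₁ + p₃ = p₂ + p₄ :=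
  BS_quadrilateral_is_parallelogram_general n hn ε p₁ p₂ p₃ p₄ r₁ r₂ r₃ r₄ hr₁ hr₂ hr₃ hr₄ hb₂ hb₄
    k₁ k₂ k₃ k₄ he₁ he₂ he₃ he₄ hk₁₂ hk₃₄ hM₁ hM₂
end

section
/- Let B and C be (additive) abelian groups, let Σ ⊆ B be a subset that generates B as a group (the subgroup generated by Σ is all of B), and let ψ : B → C be a function. Suppose that for every a ∈ B and all v, w ∈ Σ one has ψ(a) + ψ(a+v+w) = ψ(a+v) + ψ(a+w). Then ψ sends all parallelograms to parallelograms: for all a, b, c, d ∈ B with a + d = b + c, one has ψ(a) + ψ(d) = ψ(b) + ψ(c). -/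
/-!
Write `Δ_[w] ψ a = ψ (a + w) - ψ a`. The hypothesis says that `Δ_[w] ψ` is `v`-periodic whenever
`v, w ∈ Σ`. The periods of a function form a subgroup, so `Δ_[w] ψ` is periodic under all of
`B` for `w ∈ Σ`. The parallelogram identity is symmetric in `v` and `w`, so for each `v ∈ B` the
function `Δ_[v] ψ` is `w`-periodic for `w ∈ Σ`, hence for all `w ∈ B`. Taking `v = b - a` and
`w = c - a` gives the claim.
-/

open Function fwdDiff

namespace Function

def periodSubgroup {B C : Type*} [AddGroup B] (f : B → C) : AddSubgroup B where
  carrier := {v | Periodic f v}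
  add_mem' := Periodic.add_period
  zero_mem' := periodic_with_period_zero f
  neg_mem' := Periodic.neg

theorem periodic_of_closure_eq_top {B C : Type*} [AddGroup B] {f : B → C} {S : Set B}
    (hS : AddSubgroup.closure S = ⊤) (hf : ∀ v ∈ S, Periodic f v) (v : B) : Periodic f v :=
  (AddSubgroup.closure_le (periodSubgroup f)).2 hf (hS ▸ AddSubgroup.mem_top v)

end Function

section

variable {B C : Type*} [AddCommMonoid B] [AddCommGroup C] {f : B → C} {v w : B}

theorem periodic_fwdDiff_iff :
    Periodic (Δ_[w] f) v ↔ ∀ a, f a + f (a + v + w) = f (a + v) + f (a + w) := by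
  refine forall_congr' fun a => ?_
  rw [fwdDiff, fwdDiff, sub_eq_sub_iff_add_eq_add, add_comm (f a), add_comm (f (a + w))]

theorem periodic_fwdDiff_comm : Periodic (Δ_[w] f) v ↔ Periodic (Δ_[v] f) w := by
  simp only [periodic_fwdDiff_iff, add_right_comm _ v w, add_comm (f (_ + v))]

end

/-- If `ψ` preserves all parallelograms based at pairs of elements of a generating
set `Gens`, then `ψ` preserves all parallelograms. -/
theorem parallelogram_preserving_of_generators
    {B C : Type*} [AddCommGroup B] [AddCommGroup C]
    (Gens : Set B) (hgen : AddSubgroup.closure Gens = ⊤)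
    (ψ : B → C)
    (hψ : ∀ a : B, ∀ v ∈ Gens, ∀ w ∈ Gens,
      ψ a + ψ (a + v + w) = ψ (a + v) + ψ (a + w)) :
    ∀ a b c d : B, a + d = b + c → ψ a + ψ d = ψ b + ψ c := by
  have hGens : ∀ w ∈ Gens, ∀ v, Periodic (Δ_[w] ψ) v := fun w hw =>
    periodic_of_closure_eq_top hgen fun v hv => periodic_fwdDiff_iff.2 (hψ · v hv w hw)
  have hB : ∀ v w, Periodic (Δ_[v] ψ) w := fun v =>
    periodic_of_closure_eq_top hgen fun w hw => periodic_fwdDiff_comm.1 (hGens w hw v)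
  intro a b c d h
  have hd : a + (b - a) + (c - a) = d := by
    rw [eq_sub_of_add_eq' h]; abel
  have key := periodic_fwdDiff_iff.1 (hB (c - a) (b - a)) a
  rwa [hd, add_sub_cancel, add_sub_cancel] at key
end

section
/- Let S be a positive integer and let Σ be a subset of ⊕_{i∈ℤ} ℤ/2 that generates it as a group. Suppose every v ∈ Σ has its support contained in some interval of S consecutive integers (i.e. for each v ∈ Σ there is i ∈ ℤ with supp(v) ⊆ {i, i+1, …, i+S−1}). Then there exist distinct elements v, z ∈ Σ with v + z ≠ 0 such that the support of v + z is contained in an interval of 2S consecutive integers. -/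
/-!
The supports of the generators cover `ℤ`, since every element of the generated subgroup is
supported in their union. Pick a generator `v` with `0 ∈ supp v`, let `M` be the largest element
of `supp v`, and pick a generator `z` with `M + 1 ∈ supp z`. Then `z ≠ v`, so `v + z = v - z ≠ 0`,
and the `S`-intervals containing `supp v ∋ M` and `supp z ∋ M + 1` lie within `2S` consecutive
integers.
-/

theorem Finsupp.exists_mem_support_of_closure_eq_top {α M : Type*} [AddCommGroup M]
    [Nontrivial M] {s : Set (α →₀ M)} (hs : AddSubgroup.closure s = ⊤) (a : α) :
    ∃ v ∈ s, a ∈ v.support := by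
  obtain ⟨m, hm⟩ := exists_ne (0 : M)
  have hle :
      AddSubgroup.closure s ≤ (supported M ℤ (⋃ v ∈ s, (v.support : Set α))).toAddSubgroup :=
    (AddSubgroup.closure_le _).mpr fun v hv => (mem_supported ℤ v).mpr <|
      Set.subset_biUnion_of_mem (u := fun v : α →₀ M => (v.support : Set α)) hv
  have hmem := (mem_supported ℤ _).mp (hle (hs ▸ AddSubgroup.mem_top (single a m)))
  simpa using hmem (by simp [hm])

theorem Int.Icc_union_Icc_subset_Icc_min {i i' S : ℤ} (h : i ≤ i' + S) (h' : i' ≤ i + S) :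
    Set.Icc i (i + S - 1) ∪ Set.Icc i' (i' + S - 1) ⊆ Set.Icc (min i i') (min i i' + 2 * S - 1) := by
  rintro x (⟨hx₁, hx₂⟩ | ⟨hx₁, hx₂⟩) <;> constructor <;> omega

theorem no_large_generating_set_general
    (S : ℤ)
    (Gens : Set (ℤ →₀ ZMod 2)) (hgen : AddSubgroup.closure Gens = ⊤)
    (hsupp : ∀ v ∈ Gens, ∃ i : ℤ,
      (v.support : Set ℤ) ⊆ Set.Icc i (i + S - 1)) :
    ∃ v ∈ Gens, ∃ z ∈ Gens, v ≠ z ∧ v + z ≠ 0 ∧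
      ∃ i : ℤ, ((v + z).support : Set ℤ) ⊆ Set.Icc i (i + 2 * S - 1) := by
  obtain ⟨v, hv, hv₀⟩ := Finsupp.exists_mem_support_of_closure_eq_top hgen 0
  set M := v.support.max' ⟨0, hv₀⟩
  obtain ⟨z, hz, hzM⟩ := Finsupp.exists_mem_support_of_closure_eq_top hgen (M + 1)
  have hvz : v ≠ z := by
    rintro rfl
    have := v.support.le_max' _ hzM
    omega
  obtain ⟨i, hi⟩ := hsupp v hv
  obtain ⟨i', hi'⟩ := hsupp z hz
  have hM := hi (v.support.max'_mem ⟨0, hv₀⟩)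
  have hM' := hi' hzM
  simp only [Set.mem_Icc] at hM hM'
  refine ⟨v, hv, z, hz, hvz, ?_, min i i', ?_⟩
  · rw [← ZModModule.sub_eq_add]
    exact sub_ne_zero.mpr hvz
  · refine (Finset.coe_subset.mpr Finsupp.support_add).trans ?_
    rw [Finset.coe_union]
    exact (Set.union_subset_union hi hi').trans
      (Int.Icc_union_Icc_subset_Icc_min (by omega) (by omega))

/-- No generating set of `⊕_{i∈ℤ} ℤ/2` all of whose elements have support in an
interval of length `S` can have all pairwise sums supported on large intervals:
some pair of distinct generators has nonzero sum supported in an interval of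
`2S` consecutive integers. -/
theorem no_large_generating_set
    (S : ℤ) (hS : 0 < S)
    (Gens : Set (ℤ →₀ ZMod 2)) (hgen : AddSubgroup.closure Gens = ⊤)
    (hsupp : ∀ v ∈ Gens, ∃ i : ℤ,
      (v.support : Set ℤ) ⊆ Set.Icc i (i + S - 1)) :
    ∃ v ∈ Gens, ∃ z ∈ Gens, v ≠ z ∧ v + z ≠ 0 ∧
      ∃ i : ℤ, ((v + z).support : Set ℤ) ⊆ Set.Icc i (i + 2 * S - 1) :=
  no_large_generating_set_general S Gens hgen hsupp
end

section
/- Let π be the bijection of the set of functions {0,1,2} → ℤ/2 that swaps the function (1,0,0) (value 1 at index 0, value 0 at indices 1 and 2) with the function (1,1,1), and fixes all other functions. Let ψ be the induced map on finitely supported functions ℤ → ℤ/2, defined by (ψx)(i) = (π(x restricted to {0,1,2}))(i) for 0 ≤ i ≤ 2 and (ψx)(i) = x(i) otherwise. Then ψ is not parallelogram preserving: there exist a, b, c, d ∈ ⊕_{i∈ℤ} ℤ/2 with a + d = b + c but ψ(a) + ψ(d) ≠ ψ(b) + ψ(c). (Explicitly, one may take a = δ_0, d = δ_2, b = δ_0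 + δ_2, c = 0.) -/
/-- The map on `⊕_{i∈ℤ} ℤ/2` induced by a permutation `π` of the functions
`{0,…,m−1} → ℤ/2`: it applies `π` to the coordinates with indices in
`{0,…,m−1}` and leaves all other coordinates unchanged. -/
noncomputable def inducedMap (m : ℕ) (π : (Fin m → ZMod 2) → (Fin m → ZMod 2))
    (x : ℤ →₀ ZMod 2) : ℤ →₀ ZMod 2 :=
  x + ∑ j : Fin m,
    Finsupp.single ((j : ℕ) : ℤ) (π (fun k => x ((k : ℕ) : ℤ)) j - x ((j : ℕ) : ℤ))

/-- The permutation of `{0,1,2} → ℤ/2` swapping `(1,0,0)` and `(1,1,1)` and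
fixing everything else. -/
def swapPerm : (Fin 3 → ZMod 2) → (Fin 3 → ZMod 2) :=
  fun f => if f = ![1, 0, 0] then ![1, 1, 1]
    else if f = ![1, 1, 1] then ![1, 0, 0] else f

theorem inducedMap_apply_coe {m : ℕ} (π : (Fin m → ZMod 2) → (Fin m → ZMod 2))
    (x : ℤ →₀ ZMod 2) (j : Fin m) :
    inducedMap m π x ((j : ℕ) : ℤ) = π (fun k => x ((k : ℕ) : ℤ)) j := by
  have hcoe : ∀ k : Fin m, ((k : ℕ) : ℤ) = ((j : ℕ) : ℤ) ↔ k = j := by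
    intro k; rw [Nat.cast_inj, Fin.val_inj]
  simp only [inducedMap, Finsupp.add_apply, Finsupp.finsetSum_apply, Finsupp.single_apply,
    hcoe, Finset.sum_ite_eq', Finset.mem_univ, if_true, add_sub_cancel]

/-- The map induced by `swapPerm` is not parallelogram preserving. -/
theorem inducedMap_swapPerm_not_parallelogram_preserving :
    ∃ a b c d : ℤ →₀ ZMod 2, a + d = b + c ∧
      inducedMap 3 swapPerm a + inducedMap 3 swapPerm d
        ≠ inducedMap 3 swapPerm b + inducedMap 3 swapPerm c := by
  refine ⟨Finsupp.single 0 1, Finsupp.single 0 1 + Finsupp.single 2 1, 0,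
    Finsupp.single 2 1, by abel, fun h => ?_⟩
  have window_δ₀ : (fun k : Fin 3 => (Finsupp.single 0 1 : ℤ →₀ ZMod 2) k) = ![1, 0, 0] := by
    ext k; fin_cases k <;> simp
  have window_δ₂ : (fun k : Fin 3 => (Finsupp.single 2 1 : ℤ →₀ ZMod 2) k) = ![0, 0, 1] := by
    ext k; fin_cases k <;> simp
  have window_δ₀_add_δ₂ : (fun k : Fin 3 =>
      (Finsupp.single 0 1 + Finsupp.single 2 1 : ℤ →₀ ZMod 2) k) = ![1, 0, 1] := by
    ext k; fin_cases k <;> simp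
  -- Only the window `(1,0,0)` of `δ₀` is moved, and that raises its coordinate `1` from `0`
  -- to `1`; all four points have coordinate `1` equal to `0` otherwise.
  have hcoord₁ := DFunLike.congr_fun h (((1 : Fin 3) : ℕ) : ℤ)
  rw [Finsupp.add_apply, Finsupp.add_apply] at hcoord₁
  simp only [inducedMap_apply_coe, window_δ₀, window_δ₂, window_δ₀_add_δ₂,
    Finsupp.coe_zero, Pi.zero_apply] at hcoord₁
  exact absurd hcoord₁ (by decide)
end

section
/- Let k be a natural number and let ψ : ⊕_{i∈ℤ} ℤ/2 → ⊕_{i∈ℤ} ℤ/2 be a function such that for all p, q one has suppInt(ψ(p) − ψ(q)) ≤ suppInt(p − q) + k and suppInt(p − q) ≤ suppInt(ψ(p) − ψ(q)) + k. Then for every positive integer s and all a, b, c, d ∈ ⊕_{i∈ℤ} ℤ/2 with suppInt(a−b) ≤ s, suppInt(a−c) ≤ s, suppInt(b−d) ≤ s, suppInt(c−d) ≤ s, suppInt(a−d) ≥ 2s + 3k, and suppInt(b−c) ≥ 2s + 3k, one has ψ(a) + ψ(d) = ψ(b) + ψ(c). -/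
open Finset Finsupp

section SuppInt

variable {x p q : ℤ →₀ ZMod 2} {L i j : ℤ}

theorem exists_suppInt_eq_sub_add_one (hx : 0 < suppInt x) :
    ∃ i ∈ x.support, ∃ j ∈ x.support, suppInt x = i - j + 1 := by
  unfold suppInt at *
  split_ifs at * with h
  · exact ⟨_, max'_mem _ h, _, min'_mem _ h, rfl⟩
  · exact absurd hx (lt_irrefl 0)

theorem sub_lt_of_suppInt_le (hx : suppInt x ≤ L) (hi : i ∈ x.support) (hj : j ∈ x.support) :
    i - j < L := by
  rw [suppInt, dif_pos ⟨i, hi⟩] at hx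
  linarith [le_max' _ i hi, min'_le _ j hj]

theorem abs_sub_lt_of_support_subset_union (hp : suppInt p ≤ L) (hq : suppInt q ≤ L)
    (hx : x.support ⊆ p.support ∪ q.support) (hjp : j ∈ p.support) (hjq : j ∈ q.support) :
    ∀ i ∈ x.support, |i - j| < L := by
  intro i hi
  rcases mem_union.1 (hx hi) with h | h
  · exact abs_sub_lt_iff.2 ⟨sub_lt_of_suppInt_le hp h hjp, sub_lt_of_suppInt_le hp hjp h⟩
  · exact abs_sub_lt_iff.2 ⟨sub_lt_of_suppInt_le hq h hjq, sub_lt_of_suppInt_le hq hjq h⟩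

theorem suppInt_lt_of_forall_abs_sub_lt (hL : 0 < L) (hx : ∀ i ∈ x.support, |i - j| < L) :
    suppInt x < 2 * L := by
  by_contra! h
  obtain ⟨i, hi, i', hi', hii'⟩ := exists_suppInt_eq_sub_add_one (x := x) (by omega)
  have := abs_sub_lt_iff.1 (hx i hi)
  have := abs_sub_lt_iff.1 (hx i' hi')
  omega

theorem eq_zero_of_forall_abs_sub_lt (hxi : ∀ k ∈ x.support, |k - i| < L)
    (hxj : ∀ k ∈ x.support, |k - j| < L) (hij : 2 * L - 1 ≤ i - j) : x = 0 := by
  rw [← support_eq_empty, eq_empty_iff_forall_notMem]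
  intro k hk
  have := abs_sub_lt_iff.1 (hxi k hk)
  have := abs_sub_lt_iff.1 (hxj k hk)
  omega

theorem mem_support_and_mem_support_or_of_le_sub (hp : suppInt p ≤ L) (hq : suppInt q ≤ L)
    (hx : x.support ⊆ p.support ∪ q.support) (hi : i ∈ x.support) (hj : j ∈ x.support)
    (hij : L ≤ i - j) :
    i ∈ p.support ∧ j ∈ q.support ∨ i ∈ q.support ∧ j ∈ p.support := by
  rcases mem_union.1 (hx hi) with hip | hiq <;> rcases mem_union.1 (hx hj) with hjp | hjq
  · exact absurd (sub_lt_of_suppInt_le hp hip hjp) (by omega)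
  · exact Or.inl ⟨hip, hjq⟩
  · exact Or.inr ⟨hiq, hjp⟩
  · exact absurd (sub_lt_of_suppInt_le hq hiq hjq) (by omega)

theorem add_eq_add_of_suppInt_sub_le {A B C D : ℤ →₀ ZMod 2} (hL : 0 < L)
    (hAB : suppInt (A - B) ≤ L) (hAC : suppInt (A - C) ≤ L)
    (hBD : suppInt (B - D) ≤ L) (hCD : suppInt (C - D) ≤ L)
    (hAD : 2 * L ≤ suppInt (A - D)) (hBC : 2 * L ≤ suppInt (B - C)) :
    A + D = B + C := by
  obtain ⟨i, hi, j, hj, hij⟩ := exists_suppInt_eq_sub_add_one (x := A - D) (by omega)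
  have hAD₁ : (A - D).support ⊆ (A - B).support ∪ (B - D).support :=
    sub_add_sub_cancel A B D ▸ support_add
  have hAD₂ : (A - D).support ⊆ (A - C).support ∪ (C - D).support :=
    sub_add_sub_cancel A C D ▸ support_add
  have hBC' : (B - C).support ⊆ (A - C).support ∪ (A - B).support :=
    sub_sub_sub_cancel_left C B A ▸ support_sub
  have ht₁ : (A - B - (C - D)).support ⊆ (A - B).support ∪ (C - D).support := support_sub
  have ht₂ : (A - B - (C - D)).support ⊆ (A - C).support ∪ (B - D).support := by
    rw [show A - B - (C - D) = A - C - (B - D) by abel]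
    exact support_sub
  suffices A - B - (C - D) = 0 by rwa [sub_eq_zero, sub_eq_sub_iff_add_eq_add, add_comm C] at this
  rcases mem_support_and_mem_support_or_of_le_sub hAB hBD hAD₁ hi hj (by omega) with
    ⟨hiAB, hjBD⟩ | ⟨hiBD, hjAB⟩ <;>
  rcases mem_support_and_mem_support_or_of_le_sub hAC hCD hAD₂ hi hj (by omega) with
    ⟨hiAC, hjCD⟩ | ⟨hiCD, hjAC⟩
  · have := suppInt_lt_of_forall_abs_sub_lt hL
      (abs_sub_lt_of_support_subset_union hAC hAB hBC' hiAC hiAB)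
    omega
  · exact eq_zero_of_forall_abs_sub_lt
      (abs_sub_lt_of_support_subset_union hAB hCD ht₁ hiAB hiCD)
      (abs_sub_lt_of_support_subset_union hAC hBD ht₂ hjAC hjBD) (by omega)
  · exact eq_zero_of_forall_abs_sub_lt
      (abs_sub_lt_of_support_subset_union hAC hBD ht₂ hiAC hiBD)
      (abs_sub_lt_of_support_subset_union hAB hCD ht₁ hjAB hjCD) (by omega)
  · have := suppInt_lt_of_forall_abs_sub_lt hL
      (abs_sub_lt_of_support_subset_union hAC hAB hBC' hjAC hjAB)
    omega

end SuppInt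

/-- A map of `⊕_{i∈ℤ} ℤ/2` distorting `suppInt` by an additive constant `k`
sends sufficiently large `(ε,M)`-parallelograms to parallelograms. -/
theorem coarse_suppInt_preserving_sends_large_parallelograms
    (k : ℕ) (ψ : (ℤ →₀ ZMod 2) → (ℤ →₀ ZMod 2))
    (hup : ∀ p q : ℤ →₀ ZMod 2, suppInt (ψ p - ψ q) ≤ suppInt (p - q) + k)
    (hdown : ∀ p q : ℤ →₀ ZMod 2, suppInt (p - q) ≤ suppInt (ψ p - ψ q) + k) :
    ∀ s : ℤ, 0 < s → ∀ a b c d : ℤ →₀ ZMod 2,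
      suppInt (a - b) ≤ s → suppInt (a - c) ≤ s →
      suppInt (b - d) ≤ s → suppInt (c - d) ≤ s →
      2 * s + 3 * k ≤ suppInt (a - d) → 2 * s + 3 * k ≤ suppInt (b - c) →
      ψ a + ψ d = ψ b + ψ c := by
  intro s hs a b c d hab hac hbd hcd had hbc
  have hside : ∀ p q, suppInt (p - q) ≤ s → suppInt (ψ p - ψ q) ≤ s + k :=
    fun p q h => (hup p q).trans (by omega)
  have hdiag : ∀ p q, 2 * s + 3 * k ≤ suppInt (p - q) → 2 * (s + k) ≤ suppInt (ψ p - ψ q) :=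
    fun p q h => by linarith [hdown p q]
  exact add_eq_add_of_suppInt_sub_le (by omega) (hside a b hab) (hside a c hac)
    (hside b d hbd) (hside c d hcd) (hdiag a d had) (hdiag b c hbc)
end
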